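/- arXiv:1809.00056 — 2 statements merged into one kernel-verified Lean document; each statement's English description precedes it below -/
import Mathlib

section
/- Let W be an m×m complex Hermitian positive definite matrix and let P, P_T > 0 satisfy P > 1/λ_min(W) and P_T > m/λ_min(W) − tr(W⁻¹). If λ ≥ 0 (with λ = 0 when m·P ≤ P_T, and otherwise λ the solution of Σᵢ min(P, 1/λ − (W⁻¹)ᵢᵢ) = P_T) is the Lagrange multiplier of the total power constraint, then 0 ≤ λ < λ_min(W). -/
open Matrix ComplexOrder

noncomputable def mutualInfo {m : ℕ} (W R : Matrix (Fin m) (Fin m) ℂ) : ℝ :=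
  Real.log ((1 + W * R).det.re)

def jointSet (m : ℕ) (PT P : ℝ) : Set (Matrix (Fin m) (Fin m) ℂ) :=
  {R | R.PosSemidef ∧ R.trace.re ≤ PT ∧ ∀ i, (R i i).re ≤ P}

noncomputable def lamMin {m : ℕ} {W : Matrix (Fin m) (Fin m) ℂ} (hW : W.IsHermitian) : ℝ :=
  sInf (Set.range hW.eigenvalues)

lemma lamMin_pos {m : ℕ} (hm : 1 ≤ m) {W : Matrix (Fin m) (Fin m) ℂ} (hW : W.PosDef) :
    0 < lamMin hW.1 := by
  have : Nonempty (Fin m) := ⟨⟨0, hm⟩⟩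
  obtain ⟨i, hi⟩ := (Set.range_nonempty hW.1.eigenvalues).csInf_mem (Set.finite_range _)
  rw [lamMin, ← hi]
  exact hW.eigenvalues_pos i

lemma sum_min_sub_le_card_mul_sub_sum {ι : Type*} [Fintype ι] (P a b : ℝ) (d : ι → ℝ)
    (hab : a ≤ b) : ∑ i, min P (a - d i) ≤ Fintype.card ι * b - ∑ i, d i := by
  calc ∑ i, min P (a - d i) ≤ ∑ i, (b - d i) :=
        Finset.sum_le_sum fun i _ => (min_le_right _ _).trans (by linarith)
    _ = Fintype.card ι * b - ∑ i, d i := by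
        rw [Finset.sum_sub_distrib, Finset.sum_const, nsmul_eq_mul, Finset.card_univ]

lemma re_trace_eq_sum {n : Type*} [Fintype n] (A : Matrix n n ℂ) :
    A.trace.re = ∑ i, (A i i).re := by
  simp only [Matrix.trace, Matrix.diag, Complex.re_sum]

theorem stmt4_general (m : ℕ) (hm : 1 ≤ m) (W : Matrix (Fin m) (Fin m) ℂ) (hW : W.PosDef)
    (P PT : ℝ)
    (hPTlow : m / lamMin hW.1 - (W⁻¹).trace.re < PT)
    (lam : ℝ)
    (hlam1 : m * P ≤ PT → lam = 0)
    (hlam2 : PT < m * P → 0 < lam ∧ ∑ i, min P (1 / lam - (W⁻¹ i i).re) = PT) :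
    0 ≤ lam ∧ lam < lamMin hW.1 := by
  have hmin : 0 < lamMin hW.1 := lamMin_pos hm hW
  rcases le_or_gt (m * P) PT with h | h
  · rw [hlam1 h]
    exact ⟨le_rfl, hmin⟩
  · obtain ⟨hlam, hsum⟩ := hlam2 h
    refine ⟨hlam.le, lt_of_not_ge fun hle => ?_⟩
    -- At any level `λ ≥ λ_min(W)` the water-filling allocation uses at most
    -- `m / λ_min(W) - tr W⁻¹ < P_T`.
    have hle_sum := sum_min_sub_le_card_mul_sub_sum P (1 / lam) (1 / lamMin hW.1)
      (fun i => (W⁻¹ i i).re) (one_div_le_one_div_of_le hmin hle)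
    rw [re_trace_eq_sum] at hPTlow
    simp only [Fintype.card_fin, hsum] at hle_sum
    linarith [show (m : ℝ) * (1 / lamMin hW.1) = m / lamMin hW.1 by ring]

/-- Bounds on the Lagrange multiplier of the total power constraint:
`0 ≤ λ < λ_min(W)`. -/
theorem stmt4 (m : ℕ) (hm : 1 ≤ m) (W : Matrix (Fin m) (Fin m) ℂ) (hW : W.PosDef)
    (P PT : ℝ) (hP : 0 < P) (hPT : 0 < PT)
    (hPlow : 1 / lamMin hW.1 < P)
    (hPTlow : m / lamMin hW.1 - (W⁻¹).trace.re < PT)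
    (lam : ℝ)
    (hlam1 : m * P ≤ PT → lam = 0)
    (hlam2 : PT < m * P → 0 < lam ∧ ∑ i, min P (1 / lam - (W⁻¹ i i).re) = PT) :
    0 ≤ lam ∧ lam < lamMin hW.1 :=
  stmt4_general m hm W hW P PT hPTlow lam hlam1 hlam2
end

section
/- Let W = diag(w₁, …, w_m) be a diagonal positive semidefinite matrix and P > 0. Then the isotropic covariance R = P·I maximizes log det(I + W·R) over the per-antenna constraint set {R : R Hermitian, R ⪰ 0, Rᵢᵢ ≤ P for all i}, and the resulting capacity is Σᵢ log(1 + wᵢ·P). -/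
open Matrix ComplexOrder

/-- The per-antenna-only constraint set. -/
def pacSet (m : ℕ) (P : ℝ) : Set (Matrix (Fin m) (Fin m) ℂ) :=
  {R | R.PosSemidef ∧ ∀ i, (R i i).re ≤ P}

/-!
Write `W = D²` with `D = diag(√wᵢ)`. Then `det (I + W R) = det (I + D R D)`, and `I + D R D` is positive
definite with diagonal entries `1 + wᵢ Rᵢᵢ ≤ 1 + wᵢ P`, so Hadamard's inequality bounds the determinant by
`∏ᵢ (1 + wᵢ P)`, which is exactly the value at `R = P • I`. Hadamard's inequality itself comes from
`λ ≤ exp (λ - 1)` applied to the eigenvalues of the matrix rescaled to unit diagonal, whose trace is the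
dimension.
-/

namespace Matrix

variable {𝕜 : Type*} [RCLike 𝕜] {n : Type*} [Fintype n] [DecidableEq n]

theorem PosSemidef.re_det_le_exp_re_trace_sub_card {A : Matrix n n 𝕜} (hA : A.PosSemidef) :
    RCLike.re A.det ≤ Real.exp (RCLike.re A.trace - Fintype.card n) := by
  rw [hA.1.det_eq_prod_eigenvalues, hA.1.trace_eq_sum_eigenvalues, ← RCLike.ofReal_prod,
    ← RCLike.ofReal_sum, RCLike.ofReal_re, RCLike.ofReal_re, Finset.card_univ.symm,
    Finset.card_eq_sum_ones, Nat.cast_sum, Nat.cast_one, ← Finset.sum_sub_distrib, Real.exp_sum]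
  refine Finset.prod_le_prod (fun i _ => hA.eigenvalues_nonneg i) fun i _ => ?_
  simpa using Real.add_one_le_exp (hA.1.eigenvalues i - 1)

theorem PosDef.re_det_le_prod_re_diag {A : Matrix n n 𝕜} (hA : A.PosDef) :
    RCLike.re A.det ≤ ∏ i, RCLike.re (A i i) := by
  set d : n → ℝ := fun i => RCLike.re (A i i)
  have hd : ∀ i, 0 < d i := fun i => (RCLike.pos_iff.mp (hA.diag_pos (i := i))).1
  have hAd : ∀ i, A i i = (d i : 𝕜) := fun i =>
    RCLike.ext (by simp [d]) (by simpa using (RCLike.pos_iff.mp (hA.diag_pos (i := i))).2)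
  set c : n → ℝ := fun i => (√(d i))⁻¹
  have hcc : ∀ i, c i * c i = (d i)⁻¹ := fun i => by
    rw [← mul_inv, Real.mul_self_sqrt (hd i).le]
  have hc : ∀ i, c i * d i * c i = 1 := fun i => by
    rw [mul_right_comm, hcc, inv_mul_cancel₀ (hd i).ne']
  set D : Matrix n n 𝕜 := diagonal fun i => (c i : 𝕜)
  have hB : (D * A * D).PosSemidef := by
    have hD : Dᴴ = D := by simp [D, diagonal_conjTranspose]
    simpa [hD] using hA.posSemidef.conjTranspose_mul_mul_same D
  have htrace : RCLike.re (D * A * D).trace = Fintype.card n := by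
    have hdiag : ∀ i, (D * A * D) i i = 1 := fun i => by
      simp only [D, mul_diagonal, diagonal_mul, hAd]
      exact_mod_cast congrArg (fun x : ℝ => (x : 𝕜)) (hc i)
    simp [trace, hdiag]
  have hdet : RCLike.re (D * A * D).det = (∏ i, d i)⁻¹ * RCLike.re A.det := by
    have : (D * A * D).det = (((∏ i, d i)⁻¹ : ℝ) : 𝕜) * A.det := by
      rw [det_mul, det_mul, det_diagonal, ← Finset.prod_inv_distrib,
        ← Finset.prod_congr rfl fun i _ => hcc i, Finset.prod_mul_distrib]
      push_cast; ring
    rw [this, RCLike.re_ofReal_mul]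
  have := hB.re_det_le_exp_re_trace_sub_card
  rw [htrace, sub_self, Real.exp_zero, hdet] at this
  have hprod : 0 < ∏ i, d i := Finset.prod_pos fun i _ => hd i
  rwa [inv_mul_le_iff₀ hprod, mul_one] at this

theorem det_one_add_diagonal_mul_eq {w : n → ℝ} (hw : ∀ i, 0 ≤ w i) (R : Matrix n n 𝕜) :
    (1 + diagonal (fun i => (w i : 𝕜)) * R).det =
      (1 + diagonal (fun i => (√(w i) : 𝕜)) * R * diagonal fun i => (√(w i) : 𝕜)).det := by
  have hsq : diagonal (fun i => (w i : 𝕜)) =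
      diagonal (fun i => (√(w i) : 𝕜)) * diagonal fun i => (√(w i) : 𝕜) := by
    rw [diagonal_mul_diagonal]
    congr 1; funext i
    rw [← RCLike.ofReal_mul, Real.mul_self_sqrt (hw i)]
  rw [hsq, Matrix.mul_assoc, det_one_add_mul_comm, Matrix.mul_assoc]

theorem PosSemidef.posDef_one_add_diagonal_mul_mul_diagonal {R : Matrix n n 𝕜} (hR : R.PosSemidef)
    (c : n → ℝ) : (1 + diagonal (fun i => (c i : 𝕜)) * R * diagonal fun i => (c i : 𝕜)).PosDef := by
  have hD : (diagonal fun i => (c i : 𝕜))ᴴ = diagonal fun i => (c i : 𝕜) := by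
    simp [diagonal_conjTranspose]
  have hS := hR.conjTranspose_mul_mul_same (diagonal fun i => (c i : 𝕜))
  rw [hD] at hS
  exact PosDef.one.add_posSemidef hS

theorem PosSemidef.re_det_one_add_diagonal_mul_pos {R : Matrix n n 𝕜} (hR : R.PosSemidef)
    {w : n → ℝ} (hw : ∀ i, 0 ≤ w i) :
    0 < RCLike.re (1 + diagonal (fun i => (w i : 𝕜)) * R).det := by
  rw [det_one_add_diagonal_mul_eq hw]
  exact (RCLike.pos_iff.mp (hR.posDef_one_add_diagonal_mul_mul_diagonal _).det_pos).1

theorem PosSemidef.re_det_one_add_diagonal_mul_le_prod {R : Matrix n n 𝕜} (hR : R.PosSemidef)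
    {w : n → ℝ} (hw : ∀ i, 0 ≤ w i) :
    RCLike.re (1 + diagonal (fun i => (w i : 𝕜)) * R).det ≤
      ∏ i, (1 + w i * RCLike.re (R i i)) := by
  rw [det_one_add_diagonal_mul_eq hw]
  refine (hR.posDef_one_add_diagonal_mul_mul_diagonal _).re_det_le_prod_re_diag.trans_eq ?_
  refine Finset.prod_congr rfl fun i _ => ?_
  rw [add_apply, mul_diagonal, diagonal_mul, one_apply_eq, map_add, RCLike.one_re, mul_right_comm,
    ← RCLike.ofReal_mul, Real.mul_self_sqrt (hw i), RCLike.re_ofReal_mul]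

end Matrix

theorem stmt11_general (m : ℕ) (w : Fin m → ℝ) (hw : ∀ i, 0 ≤ w i)
    (P : ℝ) (hP : 0 < P) :
    (P : ℂ) • (1 : Matrix (Fin m) (Fin m) ℂ) ∈ pacSet m P ∧
    (∀ R ∈ pacSet m P,
      mutualInfo (Matrix.diagonal (fun i => (w i : ℂ))) R ≤
        mutualInfo (Matrix.diagonal (fun i => (w i : ℂ)))
          ((P : ℂ) • (1 : Matrix (Fin m) (Fin m) ℂ))) ∧
    mutualInfo (Matrix.diagonal (fun i => (w i : ℂ))) ((P : ℂ) • (1 : Matrix (Fin m) (Fin m) ℂ))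
      = ∑ i, Real.log (1 + w i * P) := by
  set W : Matrix (Fin m) (Fin m) ℂ := diagonal fun i => (w i : ℂ)
  have hdiag : 1 + W * ((P : ℂ) • 1) = diagonal fun i => ((1 + w i * P : ℝ) : ℂ) := by
    ext i j
    rcases eq_or_ne i j with rfl | hij
    · simp [W, mul_comm]
    · simp [W, hij]
  have hcapacity : mutualInfo W ((P : ℂ) • 1) = Real.log (∏ i, (1 + w i * P)) := by
    rw [mutualInfo, hdiag, det_diagonal, ← Complex.ofReal_prod, Complex.ofReal_re]
  have hvalue : mutualInfo W ((P : ℂ) • 1) = ∑ i, Real.log (1 + w i * P) := by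
    rw [hcapacity, Real.log_prod fun i _ => by nlinarith [hw i]]
  refine ⟨⟨PosSemidef.one.smul (by exact_mod_cast hP.le), fun i => by simp⟩, fun R hR => ?_, hvalue⟩
  have hRii : ∀ i, 0 ≤ (R i i).re := fun i => (Complex.nonneg_iff.mp hR.1.diag_nonneg).1
  rw [hcapacity]
  refine Real.log_le_log (hR.1.re_det_one_add_diagonal_mul_pos hw)
    ((hR.1.re_det_one_add_diagonal_mul_le_prod hw).trans (Finset.prod_le_prod ?_ ?_)) <;>
    simp only [RCLike.re_to_complex]
  · exact fun i _ => by nlinarith [hw i, hRii i]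
  · exact fun i _ => by nlinarith [hw i, hR.2 i]

/-- For a diagonal (orthogonal) channel, the isotropic covariance `P·I` is optimal
under the per-antenna constraints alone, with capacity `Σᵢ log(1 + wᵢ·P)`. -/
theorem stmt11 (m : ℕ) (hm : 1 ≤ m) (w : Fin m → ℝ) (hw : ∀ i, 0 ≤ w i)
    (P : ℝ) (hP : 0 < P) :
    (P : ℂ) • (1 : Matrix (Fin m) (Fin m) ℂ) ∈ pacSet m P ∧
    (∀ R ∈ pacSet m P,
      mutualInfo (Matrix.diagonal (fun i => (w i : ℂ))) R ≤
        mutualInfo (Matrix.diagonal (fun i => (w i : ℂ)))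
          ((P : ℂ) • (1 : Matrix (Fin m) (Fin m) ℂ))) ∧
    mutualInfo (Matrix.diagonal (fun i => (w i : ℂ))) ((P : ℂ) • (1 : Matrix (Fin m) (Fin m) ℂ))
      = ∑ i, Real.log (1 + w i * P) :=
  stmt11_general m w hw P hP
end
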